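/- In U(gl_2(ℂ)) ⊗ U(gl_2(ℂ)), the column-determinant of the matrix whose entries are the matrix of how Casimir acts reduces to commutative computation: specifically, det(Ω_λ(u) − L) equals the determinant of the matrix X(a',b',c') with commuting entries, where a'_k = λ_1E_{11} + λ_2E_{22} + u − m + (k−m)(E_{11}−E_{22}−1) for k = 0,…,m, b'_k = k·(E_{12}E_{21}), c'_k = (m−k+1) for k = 1,…,m. -/

import Mathlib

open Polynomial

attribute [local instance 100] LieRing.ofAssociativeRing

/-- `E i j` is the image in `U(gl_2(ℂ))` of the matrix unit `E_{ij}`. -/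
noncomputable def E (i j : Fin 2) :
    UniversalEnvelopingAlgebra ℂ (Matrix (Fin 2) (Fin 2) ℂ) :=
  UniversalEnvelopingAlgebra.ι ℂ (Matrix.single i j 1)

/-- Column-determinant of a matrix over a (possibly noncommutative) ring. -/
noncomputable def cdet {𝒜 : Type*} [Ring 𝒜] {n : ℕ} (A : Matrix (Fin n) (Fin n) 𝒜) : 𝒜 :=
  ∑ σ : Equiv.Perm (Fin n),
    (Equiv.Perm.sign σ : ℤ) • (List.ofFn (fun j => A (σ j) j)).prod

/-- Tridiagonal matrix with diagonal a_m,…,a_0 (top-left to bottom-right),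
superdiagonal b_m,…,b_1, subdiagonal c_m,…,c_1. -/
def trid {𝒜 : Type*} [Ring 𝒜] (m : ℕ) (a b c : ℕ → 𝒜) :
    Matrix (Fin (m+1)) (Fin (m+1)) 𝒜 :=
  fun i j =>
    if (i : ℕ) = (j : ℕ) then a (m - (i : ℕ))
    else if (i : ℕ) + 1 = (j : ℕ) then b (m - (i : ℕ))
    else if (j : ℕ) + 1 = (i : ℕ) then c (m - (j : ℕ))
    else 0

/-- The matrix Ω_λ(u) − L: tridiagonal with a_k = (λ_1+k−m)E_{11}+(λ_2+m−k)E_{22}+u−k,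
b_k = kE_{21}, c_k = (m−k+1)E_{12}. -/
noncomputable def OmegaShift (lam1 lam2 : ℤ) (m : ℕ) :
    Matrix (Fin (m+1)) (Fin (m+1))
      (Polynomial (UniversalEnvelopingAlgebra ℂ (Matrix (Fin 2) (Fin 2) ℂ))) :=
  trid m
    (fun k => (lam1 + k - m) • C (E 0 0) + (lam2 + (m : ℤ) - k) • C (E 1 1) + X -
      ((k : ℂ) • 1))
    (fun k => k • C (E 1 0))
    (fun k => ((m - k + 1 : ℕ)) • C (E 0 1))

/-!
Expanding a column-determinant along its first column shows that the column-determinants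
`D_n` of the leading tridiagonal blocks obey the three-term recursion
`D_{n+2} = a_{n+2} D_{n+1} - c_{n+2} b_{n+2} D_n`, even over a noncommutative ring: in the
second term the entries `c_{n+2}` and `b_{n+2}` come from adjacent columns, so they appear as the
product `c_{n+2} b_{n+2}`. Hence `cdet (trid m a b c)` depends only on the `a_k` and the products
`c_k b_k`, and for `Ω_λ(u) − L` and `X(a', b', c')` these agree: `a_k = a'_k` is a linear identity
and `c_k b_k = (m - k + 1) k E₁₂E₂₁ = c'_k b'_k`.
-/

section ColumnDeterminant

variable {R : Type*} [Ring R]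

lemma cdet_fin_one (A : Matrix (Fin 1) (Fin 1) R) : cdet A = A 0 0 := by
  rw [cdet, Fintype.sum_subsingleton _ 1]
  simp [List.ofFn_succ]

lemma cdet_eq_zero_of_row_eq_zero {n : ℕ} (A : Matrix (Fin n) (Fin n) R) (i : Fin n)
    (h : ∀ j, A i j = 0) : cdet A = 0 := by
  refine Finset.sum_eq_zero fun σ _ => ?_
  rw [List.prod_eq_zero, smul_zero]
  exact List.mem_ofFn.2 ⟨σ⁻¹ i, by simp [h]⟩

/-- Expansion along the first column; the minor of `A p 0` keeps its rows in the order obtained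
by swapping rows `0` and `p` and deleting row `0`. -/
lemma cdet_succ_column_zero {n : ℕ} (A : Matrix (Fin (n + 1)) (Fin (n + 1)) R) :
    cdet A = ∑ p : Fin (n + 1), (if p = 0 then 1 else -1 : ℤ) •
      (A p 0 * cdet fun i j => A (Equiv.swap 0 p i.succ) j.succ) := by
  rw [cdet, ← Equiv.sum_comp (Equiv.Perm.decomposeFin (n := n)).symm, Fintype.sum_prod_type]
  refine Finset.sum_congr rfl fun p _ => ?_
  simp only [cdet, Finset.mul_sum, Finset.smul_sum]
  refine Finset.sum_congr rfl fun σ _ => ?_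
  rw [Equiv.Perm.decomposeFin.symm_sign]
  simp only [List.ofFn_succ, List.prod_cons, Equiv.Perm.decomposeFin_symm_apply_zero,
    Equiv.Perm.decomposeFin_symm_apply_succ]
  push_cast
  rw [mul_smul, mul_smul_comm]
  split_ifs <;> simp

end ColumnDeterminant

section Tridiagonal

variable {R : Type*} [Ring R] (a b c : ℕ → R)

lemma trid_apply_eq_zero {m : ℕ} (i j : Fin (m + 1)) (h₁ : (i : ℕ) ≠ j) (h₂ : (i : ℕ) + 1 ≠ j)
    (h₃ : (j : ℕ) + 1 ≠ i) : trid m a b c i j = 0 := by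
  simp only [trid, if_neg h₁, if_neg h₂, if_neg h₃]

lemma trid_succ_succ {m : ℕ} (i j : Fin (m + 1)) :
    trid (m + 1) a b c i.succ j.succ = trid m a b c i j := by
  simp only [trid, Fin.val_succ, add_left_inj, Nat.add_sub_add_right]

lemma trid_zero_zero (m : ℕ) : trid m a b c 0 0 = a m := by
  simp [trid]

lemma trid_one_zero (m : ℕ) : trid (m + 1) a b c 1 0 = c (m + 1) := by
  simp [trid]

lemma trid_zero_one (m : ℕ) : trid (m + 1) a b c 0 1 = b (m + 1) := by
  simp [trid]

lemma cdet_trid_zero : cdet (trid 0 a b c) = a 0 := by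
  rw [cdet_fin_one, trid_zero_zero]

lemma cdet_trid_one : cdet (trid 1 a b c) = a 1 * a 0 - c 1 * b 1 := by
  have h₁₁ : trid 1 a b c 1 1 = a 0 := by simp [trid]
  rw [cdet_succ_column_zero, Fin.sum_univ_two]
  erw [cdet_fin_one, cdet_fin_one]
  simp [trid_zero_zero, trid_one_zero, trid_zero_one, h₁₁, sub_eq_add_neg]

/-- The minor of the entry `c (n + 2)` in the expansion of `cdet (trid (n + 2) a b c)` along its
first column. -/
lemma cdet_trid_minor_one_zero (n : ℕ) :
    cdet (fun i j : Fin (n + 2) => trid (n + 2) a b c (Equiv.swap 0 1 i.succ) j.succ)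
      = b (n + 2) * cdet (trid n a b c) := by
  erw [cdet_succ_column_zero, Fin.sum_univ_succ]
  -- each remaining minor contains row `0` of `trid (n + 2) a b c`, which vanishes beyond column `1`
  have h_minor_eq_zero (q : Fin (n + 1)) :
      cdet (fun i j : Fin (n + 1) =>
        trid (n + 2) a b c (Equiv.swap 0 1 ((Equiv.swap 0 q.succ) i.succ).succ) j.succ.succ)
        = 0 := by
    refine cdet_eq_zero_of_row_eq_zero _ q fun j => ?_
    rw [Equiv.swap_apply_right, Fin.succ_zero_eq_one, Equiv.swap_apply_right]
    exact trid_apply_eq_zero a b c _ _ (by simp [Fin.val_succ]) (by simp [Fin.val_succ])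
      (by simp [Fin.val_succ])
  have h_first_minor : (fun i j : Fin (n + 1) =>
      trid (n + 2) a b c (Equiv.swap 0 1 i.succ.succ) j.succ.succ) = trid n a b c := by
    funext i j
    rw [Equiv.swap_apply_of_ne_of_ne (Fin.succ_ne_zero _)
      (by rw [Ne, Fin.ext_iff, Fin.val_succ, Fin.val_succ, Fin.val_one]; omega),
      trid_succ_succ, trid_succ_succ]
  simp only [h_minor_eq_zero, mul_zero, smul_zero, Finset.sum_const_zero, add_zero,
    Equiv.swap_self, Equiv.refl_apply, Fin.succ_zero_eq_one]
  rw [Equiv.swap_apply_right, trid_zero_one, h_first_minor]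
  simp

lemma cdet_trid_succ_succ (n : ℕ) :
    cdet (trid (n + 2) a b c) =
      a (n + 2) * cdet (trid (n + 1) a b c) - c (n + 2) * b (n + 2) * cdet (trid n a b c) := by
  have h_col_zero (q : Fin (n + 1)) : trid (n + 2) a b c q.succ.succ 0 = 0 :=
    trid_apply_eq_zero _ _ _ _ _ (by simp) (by simp) (by simp [Fin.val_succ])
  have h_minor_zero_zero :
      (fun i j : Fin (n + 2) => trid (n + 2) a b c i.succ j.succ) = trid (n + 1) a b c := by
    funext i j
    exact trid_succ_succ a b c i j
  rw [cdet_succ_column_zero, Fin.sum_univ_succ, Fin.sum_univ_succ]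
  simp only [h_col_zero, zero_mul, smul_zero, Finset.sum_const_zero, add_zero, if_true,
    Equiv.swap_self, Equiv.refl_apply]
  rw [if_neg (Fin.succ_ne_zero 0), Fin.succ_zero_eq_one, trid_zero_zero, trid_one_zero,
    h_minor_zero_zero, cdet_trid_minor_one_zero]
  simp [sub_eq_add_neg, mul_assoc]

lemma cdet_trid_congr {a b c a' b' c' : ℕ → R} (ha : ∀ k, a k = a' k)
    (hcb : ∀ k, c k * b k = c' k * b' k) (m : ℕ) :
    cdet (trid m a b c) = cdet (trid m a' b' c') := by
  induction m using Nat.twoStepInduction with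
  | zero => rw [cdet_trid_zero, cdet_trid_zero, ha]
  | one => rw [cdet_trid_one, cdet_trid_one, ha, ha, hcb]
  | more n ih₀ ih₁ => rw [cdet_trid_succ_succ, cdet_trid_succ_succ, ha, hcb, ih₀, ih₁]

end Tridiagonal

theorem stmt14_general (lam1 lam2 : ℤ) (m : ℕ) :
    cdet (OmegaShift lam1 lam2 m) =
      cdet (trid m
        (fun k => lam1 • C (E 0 0) + lam2 • C (E 1 1) + X - ((m : ℂ) • 1) +
          ((k : ℤ) - (m : ℤ)) • (C (E 0 0) - C (E 1 1) - 1))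
        (fun k => k • C (E 0 1 * E 1 0))
        (fun k => ((m - k + 1 : ℕ) : ℂ) • 1)) := by
  refine cdet_trid_congr (fun k => ?_) (fun k => ?_) m
  · simp only [← Int.cast_natCast (R := ℂ), Int.cast_smul_eq_zsmul]
    module
  · rw [map_mul, Nat.cast_smul_eq_nsmul, smul_mul_assoc, smul_mul_assoc, one_mul, mul_smul_comm]

/-- The column-determinant of Ω_λ(u) − L equals the column-determinant of the tridiagonal
matrix X(a',b',c') with commuting entries, where
a'_k = λ_1E_{11} + λ_2E_{22} + u − m + (k−m)(E_{11}−E_{22}−1), b'_k = k·(E_{12}E_{21}),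
c'_k = (m−k+1). -/
theorem stmt14 (lam1 lam2 : ℤ) (hlam : lam2 ≤ lam1) (m : ℕ) (hm : (m : ℤ) = lam1 - lam2) :
    cdet (OmegaShift lam1 lam2 m) =
      cdet (trid m
        (fun k => lam1 • C (E 0 0) + lam2 • C (E 1 1) + X - ((m : ℂ) • 1) +
          ((k : ℤ) - (m : ℤ)) • (C (E 0 0) - C (E 1 1) - 1))
        (fun k => k • C (E 0 1 * E 1 0))
        (fun k => ((m - k + 1 : ℕ) : ℂ) • 1)) :=
  stmt14_general lam1 lam2 m
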